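/- For every K ≥ 1, every U with 1 ≤ U ≤ K, and every n ≥ 1, there exists M : ℝ → ℝ such that for each α₁ > 0, Pr(K⁺ = U | K, n, α₁, α₂) tends to M α₁ as α₂ → 0⁺, and M α₁ tends to s(n, U)/Uⁿ as α₁ → ∞, where s(n, U) denotes the number of surjective functions from Fin n onto Fin U. In other words, for fixed n the iterated limit lim_{α₁→∞} lim_{α₂→0⁺} Pr(K⁺ = U | K, n, α₁, α₂) equals the proportion of surjective allocations s(n, U)/Uⁿ. -/

import Mathlib

/-!
Since `Γ(x + m) / Γ(x)` is the rising factorial `x⁽ᵐ⁾`, the allocation probability is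
`p(z) = ∏ₖ αₖ⁽ⁿᵏ⁾ / A⁽ⁿ⁾`, a rational function of `α₂` whose denominator stays positive at
`α₂ = 0` (there `A = U α₁`). So the inner limit is obtained by setting `α₂ = 0`, which kills every
allocation that occupies a component `k ≥ U` (as `0⁽ᵐ⁾ = 0` for `m ≥ 1`). Each surviving allocation
has weight `∏ₖ α₁⁽ⁿᵏ⁾ / (U α₁)⁽ⁿ⁾ ~ α₁ⁿ / (U α₁)ⁿ = U⁻ⁿ`, and the allocations into the first `U`
components with `K⁺ = U` are exactly the surjections onto `Fin U`.
-/

open Filter Topology Finset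

/-- Number of indices `i` with `z i = k`. -/
def nk {n K : ℕ} (z : Fin n → Fin K) (k : Fin K) : ℕ :=
  (Finset.univ.filter (fun i => z i = k)).card

/-- Number of occupied components (distinct values taken by `z`). -/
def Kplus {n K : ℕ} (z : Fin n → Fin K) : ℕ :=
  (Finset.univ.image z).card

/-- Marginal allocation probability under an asymmetric Dirichlet(α₁ on first U
coordinates, α₂ on the rest) prior on the mixture weights. -/
noncomputable def pz (K U n : ℕ) (α₁ α₂ : ℝ) (z : Fin n → Fin K) : ℝ :=
  (Real.Gamma ((U : ℝ) * α₁ + ((K : ℝ) - (U : ℝ)) * α₂) /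
      Real.Gamma ((U : ℝ) * α₁ + ((K : ℝ) - (U : ℝ)) * α₂ + (n : ℝ))) *
    ∏ k : Fin K,
      Real.Gamma ((if (k : ℕ) < U then α₁ else α₂) + (nk z k : ℝ)) /
        Real.Gamma (if (k : ℕ) < U then α₁ else α₂)

/-- Prior probability that the number of occupied components equals `u`. -/
noncomputable def prKplus (K U n : ℕ) (α₁ α₂ : ℝ) (u : ℕ) : ℝ :=
  ∑ z ∈ Finset.univ.filter (fun z : Fin n → Fin K => Kplus z = u),
    pz K U n α₁ α₂ z


/-- Number of surjective functions from `Fin n` onto `Fin U`. -/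
noncomputable def surjCount (n U : ℕ) : ℕ :=
  Nat.card {f : Fin n → Fin U // Function.Surjective f}

open Polynomial Asymptotics

theorem Real.Gamma_add_nat_div_Gamma_eq {x : ℝ} (hx : ∀ k : ℕ, x ≠ -k) (m : ℕ) :
    Real.Gamma (x + m) / Real.Gamma x = (ascPochhammer ℝ m).eval x := by
  induction m with
  | zero => simp [div_self (Real.Gamma_ne_zero fun k hk => hx k hk)]
  | succ m ih =>
    have hxm : x + m ≠ 0 := fun h => hx m (by linarith)
    rw [ascPochhammer_succ_eval, ← ih, Nat.cast_succ, ← add_assoc, Real.Gamma_add_one hxm]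
    ring

theorem tendsto_prod_ascPochhammer_div_atTop {ι : Type*} (s : Finset ι) (m : ι → ℕ) {c : ℝ}
    (hc : 0 < c) :
    Tendsto (fun a : ℝ => (∏ k ∈ s, (ascPochhammer ℝ (m k)).eval a) /
      (ascPochhammer ℝ (∑ k ∈ s, m k)).eval (c * a)) atTop (𝓝 (c ^ ∑ k ∈ s, m k)⁻¹) := by
  have hlead (N : ℕ) : (fun a : ℝ => (ascPochhammer ℝ N).eval a) ~[atTop] fun a => a ^ N := by
    simpa [(monic_ascPochhammer ℝ N).leadingCoeff, ascPochhammer_natDegree] using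
      isEquivalent_atTop_lead (P := ascPochhammer ℝ N)
  have hnum : (fun a : ℝ => ∏ k ∈ s, (ascPochhammer ℝ (m k)).eval a) ~[atTop]
      fun a => a ^ ∑ k ∈ s, m k := by
    simpa [Finset.prod_pow_eq_pow_sum] using IsEquivalent.finsetProd fun k _ => hlead (m k)
  have hden := (hlead (∑ k ∈ s, m k)).comp_tendsto (tendsto_id.const_mul_atTop hc)
  refine ((hnum.div hden).congr_right ?_).symm.tendsto_nhds tendsto_const_nhds
  filter_upwards [eventually_gt_atTop 0] with a ha
  simp only [Pi.div_apply, Function.comp_apply, id_eq, mul_pow]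
  field_simp

section Allocation

variable {K U n : ℕ}

lemma sum_nk (z : Fin n → Fin K) : ∑ k, nk z k = n := by
  simp only [nk]
  rw [← Finset.card_eq_sum_card_fiberwise fun i _ => Finset.mem_univ (z i), Finset.card_univ,
    Fintype.card_fin]

lemma Kplus_castLE_comp (h : U ≤ K) (f : Fin n → Fin U) : Kplus (Fin.castLE h ∘ f) = Kplus f := by
  rw [Kplus, Kplus, ← Finset.image_image, Finset.card_image_of_injective _ (Fin.castLE_injective h)]

lemma Kplus_eq_iff_surjective (f : Fin n → Fin U) : Kplus f = U ↔ Function.Surjective f := by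
  have h := (Finset.univ.image f).card_eq_iff_eq_univ
  rw [Fintype.card_fin] at h
  rw [Kplus, h, Finset.eq_univ_iff_forall]
  simp [Function.Surjective]

lemma card_filter_Kplus_eq_and_lt (h : U ≤ K) :
    #{z : Fin n → Fin K | Kplus z = U ∧ ∀ i, (z i : ℕ) < U} = surjCount n U := by
  rw [surjCount, Nat.card_eq_fintype_card, Fintype.card_subtype]
  symm
  apply Finset.card_bij (fun f _ => Fin.castLE h ∘ f)
  · intro f hf
    simp only [Finset.mem_filter, Finset.mem_univ, true_and] at hf ⊢
    exact ⟨(Kplus_castLE_comp h f).trans ((Kplus_eq_iff_surjective f).2 hf), fun i => (f i).isLt⟩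
  · intro f _ g _ hfg
    exact (Fin.castLE_injective h).comp_left hfg
  · intro z hz
    simp only [Finset.mem_filter, Finset.mem_univ, true_and] at hz
    obtain ⟨hKplus, hlt⟩ := hz
    refine ⟨fun i => ⟨z i, hlt i⟩, ?_, rfl⟩
    simp only [Finset.mem_filter, Finset.mem_univ, true_and]
    exact (Kplus_eq_iff_surjective _).1 (by rwa [← Kplus_castLE_comp h])

end Allocation

/-- Unlike `pz`, this rational form of the marginal stays meaningful at `α₂ = 0`. -/
noncomputable def pzRising (K U n : ℕ) (α₁ α₂ : ℝ) (z : Fin n → Fin K) : ℝ :=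
  (∏ k : Fin K, (ascPochhammer ℝ (nk z k)).eval (if (k : ℕ) < U then α₁ else α₂)) /
    (ascPochhammer ℝ n).eval ((U : ℝ) * α₁ + ((K : ℝ) - (U : ℝ)) * α₂)

section Marginal

variable {K U n : ℕ} {α₁ α₂ : ℝ}

lemma pz_eq_pzRising (hU : 0 < U) (hUK : U ≤ K) (h₁ : 0 < α₁) (h₂ : 0 < α₂)
    (z : Fin n → Fin K) : pz K U n α₁ α₂ z = pzRising K U n α₁ α₂ z := by
  have not_neg_nat {x : ℝ} (hx : 0 < x) (k : ℕ) : x ≠ -k := by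
    have : (0 : ℝ) ≤ k := k.cast_nonneg
    linarith
  have hA : 0 < (U : ℝ) * α₁ + ((K : ℝ) - (U : ℝ)) * α₂ := by
    have : (U : ℝ) ≤ K := by exact_mod_cast hUK
    have : (0 : ℝ) < U := by exact_mod_cast hU
    positivity
  have hweight (k : Fin K) : 0 < if (k : ℕ) < U then α₁ else α₂ := by split_ifs <;> assumption
  simp only [pz, pzRising, ← Real.Gamma_add_nat_div_Gamma_eq (not_neg_nat hA),
    ← Real.Gamma_add_nat_div_Gamma_eq (not_neg_nat (hweight _))]
  rw [div_div_eq_mul_div]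
  ring

lemma continuousAt_pzRising (hU : 0 < U) (h₁ : 0 < α₁) (z : Fin n → Fin K) :
    ContinuousAt (fun α₂ => pzRising K U n α₁ α₂ z) 0 := by
  have hden : (ascPochhammer ℝ n).eval ((U : ℝ) * α₁ + ((K : ℝ) - (U : ℝ)) * 0) ≠ 0 :=
    (ascPochhammer_pos n _ (by simpa using mul_pos (Nat.cast_pos.2 hU) h₁)).ne'
  refine ContinuousAt.div ?_ (by fun_prop) hden
  refine (continuous_finsetProd _ fun k _ => ?_).continuousAt
  split_ifs <;> fun_prop

lemma pzRising_zero_eq_zero {z : Fin n → Fin K} {i : Fin n} (hi : U ≤ z i) :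
    pzRising K U n α₁ 0 z = 0 := by
  have hocc : nk z (z i) ≠ 0 := Finset.card_ne_zero.2 ⟨i, by simp⟩
  rw [pzRising, Finset.prod_eq_zero (Finset.mem_univ (z i)) (by simp [hi.not_gt, hocc]), zero_div]

lemma pzRising_zero_eq {z : Fin n → Fin K} (hz : ∀ i, (z i : ℕ) < U) :
    pzRising K U n α₁ 0 z =
      (∏ k, (ascPochhammer ℝ (nk z k)).eval α₁) / (ascPochhammer ℝ n).eval (U * α₁) := by
  rw [pzRising, mul_zero, add_zero]
  congr 1
  refine Finset.prod_congr rfl fun k _ => ?_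
  split_ifs with hk
  · rfl
  · have : nk z k = 0 := Finset.card_eq_zero.2 <| Finset.filter_eq_empty_iff.2
      fun i _ hik => hk (hik ▸ hz i)
    simp [this]

lemma tendsto_pzRising_zero_atTop (hU : 0 < U) (z : Fin n → Fin K) :
    Tendsto (fun α₁ => pzRising K U n α₁ 0 z) atTop
      (𝓝 (if ∀ i, (z i : ℕ) < U then ((U : ℝ) ^ n)⁻¹ else 0)) := by
  split_ifs with hz
  · simp only [pzRising_zero_eq hz]
    simpa [sum_nk] using tendsto_prod_ascPochhammer_div_atTop Finset.univ (nk z)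
      (Nat.cast_pos.2 hU : (0 : ℝ) < U)
  · push Not at hz
    obtain ⟨i, hi⟩ := hz
    simpa only [pzRising_zero_eq_zero hi] using tendsto_const_nhds

end Marginal

section Limits

variable {K U n : ℕ}

lemma tendsto_prKplus_nhdsGT_zero (hU : 0 < U) (hUK : U ≤ K) {α₁ : ℝ} (h₁ : 0 < α₁) (u : ℕ) :
    Tendsto (fun α₂ => prKplus K U n α₁ α₂ u) (𝓝[>] 0)
      (𝓝 (∑ z : Fin n → Fin K with Kplus z = u, pzRising K U n α₁ 0 z)) := by
  refine (tendsto_finsetSum _ fun z _ =>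
    (continuousAt_pzRising hU h₁ z).tendsto.mono_left nhdsWithin_le_nhds).congr' ?_
  filter_upwards [self_mem_nhdsWithin] with α₂ h₂
  exact Finset.sum_congr rfl fun z _ => (pz_eq_pzRising hU hUK h₁ h₂ z).symm

lemma tendsto_sum_pzRising_zero_atTop (hU : 0 < U) (hUK : U ≤ K) :
    Tendsto (fun α₁ => ∑ z : Fin n → Fin K with Kplus z = U, pzRising K U n α₁ 0 z) atTop
      (𝓝 ((surjCount n U : ℝ) / (U : ℝ) ^ n)) := by
  convert tendsto_finsetSum _ fun z _ => tendsto_pzRising_zero_atTop (K := K) (n := n) hU z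
  rw [← Finset.sum_filter, Finset.filter_filter, Finset.sum_const, card_filter_Kplus_eq_and_lt hUK,
    nsmul_eq_mul, div_eq_mul_inv]

end Limits

theorem stmt_2_general (K U n : ℕ) (hU1 : 1 ≤ U) (hUK : U ≤ K) :
    ∃ M : ℝ → ℝ,
      (∀ α₁ : ℝ, 0 < α₁ →
        Tendsto (fun α₂ : ℝ => prKplus K U n α₁ α₂ U) (𝓝[>] 0) (𝓝 (M α₁))) ∧
      Tendsto M atTop (𝓝 ((surjCount n U : ℝ) / (U : ℝ) ^ n)) :=
  ⟨fun α₁ => ∑ z : Fin n → Fin K with Kplus z = U, pzRising K U n α₁ 0 z,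
    fun _ h₁ => tendsto_prKplus_nhdsGT_zero hU1 hUK h₁ U, tendsto_sum_pzRising_zero_atTop hU1 hUK⟩

theorem stmt_2 (K U n : ℕ) (hK : 1 ≤ K) (hU1 : 1 ≤ U) (hUK : U ≤ K)
    (hn : 1 ≤ n) :
    ∃ M : ℝ → ℝ,
      (∀ α₁ : ℝ, 0 < α₁ →
        Tendsto (fun α₂ : ℝ => prKplus K U n α₁ α₂ U) (𝓝[>] 0) (𝓝 (M α₁))) ∧
      Tendsto M atTop (𝓝 ((surjCount n U : ℝ) / (U : ℝ) ^ n)) :=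
  stmt_2_general K U n hU1 hUK
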